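/- arXiv:math/0406116 — 2 statements merged into one kernel-verified Lean document; each statement's English description precedes it below -/
import Mathlib

section
/- Let M be a matroid on a finite ground set E, ω : E → ℝ, and let B be a basis of M of minimal ω-weight. Then for every circuit C of M, init_ω(C) is not a subset of B. -/
/-- `initW ω C` is the set of `ω`-maximal elements of `C`. -/
def initW {α : Type*} (ω : α → ℝ) (C : Set α) : Set α :=
  {e ∈ C | ∀ f ∈ C, ω f ≤ ω e}

/-- A circuit of a matroid is a minimal dependent set. -/
def IsCircuit {α : Type*} (M : Matroid α) (C : Set α) : Prop :=
  Minimal M.Dep C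

/-!
If `e` is an `ω`-maximal element of a circuit `C` lying in `B`, then some `f ∈ C \ B` can be
exchanged for `e`, because `C \ {e}` cannot lie in the closure of `B \ {e}`. If all of
`init_ω(C)` were in `B`, then `f ∉ init_ω(C)`, so `ω f < ω e` and the base `B - e + f` would
be lighter than `B`.
-/

namespace Matroid

variable {α : Type*} {M : Matroid α} {B C : Set α} {e : α}

lemma IsCircuit.exists_exchange_isBase (hC : M.IsCircuit C) (hB : M.IsBase B) (heC : e ∈ C)
    (heB : e ∈ B) : ∃ f ∈ C \ B, M.IsBase (insert f (B \ {e})) := by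
  have hnot : ¬ C \ {e} ⊆ M.closure (B \ {e}) := fun h ↦
    hB.indep.notMem_closure_sdiff_of_mem heB <|
      M.closure_subset_closure_of_subset_closure h (hC.mem_closure_sdiff_singleton_of_mem heC)
  obtain ⟨f, ⟨hfC, hfe⟩, hfcl⟩ := Set.not_subset.mp hnot
  have hfB : f ∉ B := fun hfB ↦ hfcl <|
    M.subset_closure _ (Set.sdiff_subset.trans hB.subset_ground) ⟨hfB, hfe⟩
  exact ⟨f, ⟨hfC, hfB⟩, hB.exchange_base_of_notMem_closure heB hfcl (hC.subset_ground hfC)⟩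

end Matroid

lemma finsum_mem_insert_sdiff_singleton {α G : Type*} [AddCommGroup G] (g : α → G) {s : Set α}
    {a b : α} (hs : s.Finite) (ha : a ∈ s) (hb : b ∉ s) :
    ∑ᶠ x ∈ insert b (s \ {a}), g x = ∑ᶠ x ∈ s, g x - g a + g b := by
  rw [finsum_mem_insert g (fun h ↦ hb h.1) (hs.subset Set.sdiff_subset),
    ← finsum_mem_add_sdiff (Set.singleton_subset_iff.mpr ha) hs, finsum_mem_singleton]
  abel

lemma initW_nonempty {α : Type*} (ω : α → ℝ) {C : Set α} (hC : C.Finite) (hne : C.Nonempty) :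
    (initW ω C).Nonempty :=
  Set.exists_max_image C ω hC hne

lemma lt_of_mem_initW_of_notMem_initW {α : Type*} {ω : α → ℝ} {C : Set α} {e f : α}
    (he : e ∈ initW ω C) (hfC : f ∈ C) (hf : f ∉ initW ω C) : ω f < ω e := by
  obtain ⟨g, hgC, hfg⟩ : ∃ g ∈ C, ω f < ω g := by
    by_contra! h
    exact hf ⟨hfC, h⟩
  exact hfg.trans_le (he.2 g hgC)

/-- If `B` is a basis of minimal `ω`-weight of a matroid `M` on a finite ground set, then
for every circuit `C` of `M`, the set of `ω`-maximal elements of `C` is not contained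
in `B`. -/
theorem stmt2 {α : Type*} (M : Matroid α) (hfin : M.E.Finite) (ω : α → ℝ) (B : Set α)
    (hB : M.IsBase B) (hmin : ∀ B' : Set α, M.IsBase B' → ∑ᶠ e ∈ B, ω e ≤ ∑ᶠ e ∈ B', ω e) :
    ∀ C : Set α, IsCircuit M C → ¬ initW ω C ⊆ B := by
  intro C hC hsub
  replace hC : M.IsCircuit C := hC
  obtain ⟨e, he⟩ := initW_nonempty ω (hfin.subset hC.subset_ground) hC.nonempty
  obtain ⟨f, ⟨hfC, hfB⟩, hB'⟩ := hC.exists_exchange_isBase hB he.1 (hsub he)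
  have hlt : ω f < ω e := lt_of_mem_initW_of_notMem_initW he hfC (fun h ↦ hfB (hsub h))
  have hle := hmin _ hB'
  rw [finsum_mem_insert_sdiff_singleton ω (hfin.subset hB.subset_ground) (hsub he) hfB] at hle
  linarith
end

section
/- Let M be a matroid on a finite ground set E and ω : E → ℝ. If B is maximal among the subsets of E that contain no set of the form init_ω(C) for a circuit C of M, then B is a basis of M. -/
/-!
A set `B ⊆ E` containing no initial form `init_ω(C)` contains no circuit, so it is independent.
If it did not span, take `e ∉ cl(B)` of least weight. For a circuit `C` whose initial form lies in
`B ∪ {e}`, the element `e` is `ω`-maximal in `C`, and since `e ∈ cl(C - e)` some `g ∈ C - e`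
lies outside `cl(B)`. Minimality of `ω e` makes `g` maximal too, so `g ∈ B`, which is absurd.
Hence `B ∪ {e}` also avoids all initial forms, contradicting the maximality of `B`.
-/

open Set

section

variable {α : Type*} {M : Matroid α} {ω : α → ℝ} {C I : Set α} {e : α}

lemma isCircuit_iff_isCircuit : IsCircuit M C ↔ M.IsCircuit C := Iff.rfl

lemma initW_subset (ω : α → ℝ) (C : Set α) : initW ω C ⊆ C := fun _ he ↦ he.1

lemma Matroid.indep_of_forall_not_initW_subset (hI : I ⊆ M.E)
    (h : ∀ C, M.IsCircuit C → ¬ initW ω C ⊆ I) : M.Indep I := by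
  by_contra hdep
  obtain ⟨C, hCI, hC⟩ := ((M.not_indep_iff hI).1 hdep).exists_isCircuit_subset
  exact h C hC ((initW_subset ω C).trans hCI)

lemma Matroid.IsCircuit.not_initW_subset_insert (hC : M.IsCircuit C) (hCI : ¬ initW ω C ⊆ I)
    (he : e ∉ M.closure I) (hmin : ∀ f ∈ M.E \ M.closure I, ω e ≤ ω f) :
    ¬ initW ω C ⊆ insert e I := by
  intro hsub
  have heC : e ∈ initW ω C := by
    by_contra heC
    exact hCI fun x hx ↦ (hsub hx).resolve_left (by rintro rfl; exact heC hx)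
  obtain ⟨g, ⟨hgC, hge⟩, hgI⟩ : ∃ g ∈ C \ {e}, g ∉ M.closure I := by
    by_contra! hCe
    exact he (M.closure_subset_closure_of_subset_closure hCe
      (hC.mem_closure_sdiff_singleton_of_mem heC.1))
  have hgE : g ∈ M.E := hC.subset_ground hgC
  have hg : g ∈ initW ω C :=
    ⟨hgC, fun f hf ↦ (heC.2 f hf).trans (hmin g ⟨hgE, hgI⟩)⟩
  exact hgI (M.mem_closure_of_mem' ((hsub hg).resolve_left hge) hgE)

end

/-- If `B` is maximal among the subsets of the (finite) ground set of `M` that contain no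
set of the form `initW ω C` for a circuit `C` of `M`, then `B` is a basis of `M`. -/
theorem stmt3 {α : Type*} (M : Matroid α) (hfin : M.E.Finite) (ω : α → ℝ) (B : Set α)
    (hB : Maximal (fun S : Set α =>
      S ⊆ M.E ∧ ∀ C : Set α, IsCircuit M C → ¬ initW ω C ⊆ S) B) :
    M.IsBase B := by
  obtain ⟨⟨hBE, hBfree⟩, hmax⟩ := hB
  simp only [isCircuit_iff_isCircuit] at hBfree hmax
  refine (M.indep_of_forall_not_initW_subset hBE hBfree).isBase_of_spanning
    ((M.spanning_iff_ground_subset_closure hBE).2 ?_)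
  by_contra hns
  obtain ⟨e, he, hemin⟩ :=
    exists_min_image (M.E \ M.closure B) ω hfin.sdiff (sdiff_nonempty.2 hns)
  have hfree : insert e B ⊆ M.E ∧ ∀ C, M.IsCircuit C → ¬ initW ω C ⊆ insert e B :=
    ⟨insert_subset he.1 hBE, fun C hC ↦ hC.not_initW_subset_insert (hBfree C hC) he.2 hemin⟩
  exact he.2 (M.mem_closure_of_mem' (hmax hfree (subset_insert e B) (mem_insert e B)) he.1)
end
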